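/- arXiv:2207.11863 — 6 statements merged into one kernel-verified Lean document; each statement's English description precedes it below -/
import Mathlib

section
/- With G = Z/4 × Z/2 and F = Z/2 = {1, t}, the maps σ(x^i y^j; t, t) = (-1)^{i(i-1)/2} and τ(x^i y^j, x^k y^l; t) = (-1)^{jk} (with σ, τ trivial whenever any Z/2-argument is 1) satisfy the compatibility condition that for all g = x^i y^j, g' = x^k y^l in G, σ(gg'; t, t) = σ(g; t, t) σ(g'; t, t) τ(g, g'; t) τ(g ◁ t, g' ◁ t; t), where g ◁ t is the automorphism x ↦ xy, y ↦ y. -/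
/-- `σ(x^i y^j; t, t) = (-1)^{i(i-1)/2}` (it depends only on the exponent `i` of `x`). -/
def sigmaN (i : ℕ) : ℤ := (-1) ^ (i * (i - 1) / 2)

/-- `τ(x^i y^j, x^k y^l; t) = (-1)^{jk}` (it depends only on `j` and `k`). -/
def tauN (j k : ℕ) : ℤ := (-1) ^ (j * k)

lemma tri_succ (n : ℕ) : (n+1) * n / 2 = n * (n-1) / 2 + n := by
  rcases Nat.even_or_odd n with ⟨m, hm⟩ | ⟨m, hm⟩ <;> subst hm <;>
    cases m <;> simp <;> ring_nf <;> omega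

lemma tri_add (i k : ℕ) : (i+k) * (i+k-1) / 2 = i*(i-1)/2 + k*(k-1)/2 + i*k := by
  induction k with
  | zero => simp
  | succ n ih =>
    have h1 : (i + (n+1)) * (i + (n+1) - 1) / 2 = (i+n) * (i+n-1) / 2 + (i+n) := by
      have := tri_succ (i+n)
      simpa [Nat.add_assoc] using this
    have h2 := tri_succ n
    simp only [Nat.add_sub_cancel, Nat.mul_succ] at *
    linarith

/-- Compatibility of `σ` and `τ` for `H_{c:σ₀}`: for all `g = x^i y^j`, `g' = x^k y^l`,
`σ(gg'; t, t) = σ(g; t, t) σ(g'; t, t) τ(g, g'; t) τ(g ◁ t, g' ◁ t; t)`,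
where `g ◁ t = x^i y^{i+j}` and `g' ◁ t = x^k y^{k+l}` (note `τ(g, g'; tt) = 1`). -/
theorem stmt1 : ∀ i j k l : ℕ,
    sigmaN (i + k) = sigmaN i * sigmaN k * tauN j k * tauN (i + j) k := by
  intro i j k l
  simp only [sigmaN, tauN, ← pow_add, tri_add]
  rw [show i*(i-1)/2 + k*(k-1)/2 + (j*k) + (i+j)*k
      = (i*(i-1)/2 + k*(k-1)/2 + i*k) + 2*(j*k) by ring_nf]
  simp [pow_add, pow_mul]
end

section
/- Let V be a 2-dimensional vector space over k (char 0) with basis v, w, and define the braiding c(v⊗v) = r w⊗w, c(v⊗w) = p v⊗w, c(w⊗v) = p w⊗v, c(w⊗w) = m v⊗v for nonzero scalars r, p, m. Then c satisfies the braid equation (c⊗id)(id⊗c)(c⊗id) = (id⊗c)(c⊗id)(id⊗c) on V⊗V⊗V. -/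
open Matrix

variable {k : Type*} [Field k]

/-- The matrix of the braiding `c` acting in positions `i, i+1` of the `n`-fold tensor
power of the `d`-dimensional space `V`, where `C p p'` is the coefficient of the basis
vector `e_{p'}` in `c (e_p)` for `p, p' : Fin d × Fin d`. -/
def cMat (d : ℕ) (C : (Fin d × Fin d) → (Fin d × Fin d) → k) (n i : ℕ) :
    Matrix (Fin n → Fin d) (Fin n → Fin d) k := fun w' w =>
  if h : i + 1 < n then
    if ∀ j : Fin n, (j : ℕ) ≠ i → (j : ℕ) ≠ i + 1 → w' j = w j then
      C (w ⟨i, Nat.lt_of_succ_lt h⟩, w ⟨i + 1, h⟩)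
        (w' ⟨i, Nat.lt_of_succ_lt h⟩, w' ⟨i + 1, h⟩)
    else 0
  else 0

/-- `OmegaUpper d C n m = id + c_n + c_n c_{n-1} + ⋯` (with `m` terms after `id`,
counted from the top); `OmegaUpper d C n n` is the map `Ω_{n,1}` on `V^{⊗(n+1)}`. -/
def OmegaUpper (d : ℕ) (C : (Fin d × Fin d) → (Fin d × Fin d) → k) (n : ℕ) :
    ℕ → Matrix (Fin (n + 1) → Fin d) (Fin (n + 1) → Fin d) k
  | 0 => 1
  | m + 1 => 1 + cMat d C (n + 1) m * OmegaUpper d C n m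

/-- Extension `M ⊗ id` of an endomorphism of `V^{⊗n}` to `V^{⊗(n+1)}`. -/
def extMat (d n : ℕ) (M : Matrix (Fin n → Fin d) (Fin n → Fin d) k) :
    Matrix (Fin (n + 1) → Fin d) (Fin (n + 1) → Fin d) k := fun w' w =>
  (if w' (Fin.last n) = w (Fin.last n) then 1 else 0) * M (Fin.init w') (Fin.init w)

/-- The quantum symmetrizer `Ω_n` on `V^{⊗n}`: `Ω_0 = Ω_1 = id`,
`Ω_{n+1} = (Ω_n ⊗ id) Ω_{n,1}`. -/
def Omega (d : ℕ) (C : (Fin d × Fin d) → (Fin d × Fin d) → k) :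
    (n : ℕ) → Matrix (Fin n → Fin d) (Fin n → Fin d) k
  | 0 => 1
  | n + 1 => extMat d n (Omega d C n) * OmegaUpper d C n n

/-- The Nichols algebra `B(V) = ⊕ₙ V^{⊗n}/ker Ω_n` of the braided vector space with
braiding-coefficient matrix `C` has (total) dimension `D`. -/
def NicholsHasDim (d : ℕ) (C : (Fin d × Fin d) → (Fin d × Fin d) → k) (D : ℕ) : Prop :=
  ∃ N : ℕ, (∀ n, N ≤ n → (Omega d C n).rank = 0) ∧
    (∑ n ∈ Finset.range N, (Omega d C n).rank) = D

/-- The braiding matrix of a diagonal-type braiding `c(x_i ⊗ x_j) = q_{ij} x_j ⊗ x_i`. -/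
def diagC (d : ℕ) (q : Fin d → Fin d → k) : (Fin d × Fin d) → (Fin d × Fin d) → k :=
  fun a b => if b = (a.2, a.1) then q a.1 a.2 else 0

/-- The braiding `c(v⊗v) = r w⊗w`, `c(v⊗w) = p v⊗w`, `c(w⊗v) = p w⊗v`,
`c(w⊗w) = m v⊗v` on a 2-dimensional space with basis `v = e₀`, `w = e₁`. -/
def braidC (r p m : k) : (Fin 2 × Fin 2) → (Fin 2 × Fin 2) → k := fun a b =>
  if a = (0, 0) ∧ b = (1, 1) then r
  else if a = (0, 1) ∧ b = (0, 1) then p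
  else if a = (1, 0) ∧ b = (1, 0) then p
  else if a = (1, 1) ∧ b = (0, 0) then m
  else 0

def v3 (a b c : Fin 2) : Fin 3 → Fin 2 := fun i => if i = 0 then a else if i = 1 then b else c

@[simp] lemma v3_0 (a b c : Fin 2) : v3 a b c 0 = a := rfl
@[simp] lemma v3_1 (a b c : Fin 2) : v3 a b c 1 = b := rfl
@[simp] lemma v3_2 (a b c : Fin 2) : v3 a b c 2 = c := rfl

lemma cMat0 (C : (Fin 2 × Fin 2) → (Fin 2 × Fin 2) → k) (w' w : Fin 3 → Fin 2) :
    cMat 2 C 3 0 w' w = if w' 2 = w 2 then C (w 0, w 1) (w' 0, w' 1) else 0 := by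
  simp only [cMat]
  rw [dif_pos (by norm_num)]
  congr 1
  simp [Fin.forall_fin_succ, eq_iff_iff]

lemma cMat1 (C : (Fin 2 × Fin 2) → (Fin 2 × Fin 2) → k) (w' w : Fin 3 → Fin 2) :
    cMat 2 C 3 1 w' w = if w' 0 = w 0 then C (w 1, w 2) (w' 1, w' 2) else 0 := by
  simp only [cMat]
  rw [dif_pos (by norm_num)]
  congr 1
  simp [Fin.forall_fin_succ, eq_iff_iff]

lemma sum_pi3 (g : (Fin 3 → Fin 2) → k) :
    ∑ f, g f = ∑ x : Fin 2 × Fin 2 × Fin 2, g (v3 x.1 x.2.1 x.2.2) := by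
  refine (Fintype.sum_bijective (fun x : Fin 2 × Fin 2 × Fin 2 => v3 x.1 x.2.1 x.2.2)
    (by decide) _ _ (fun x => rfl)).symm


set_option maxHeartbeats 2000000 in
/-- The braiding `c(v⊗v) = r w⊗w`, `c(v⊗w) = p v⊗w`, `c(w⊗v) = p w⊗v`,
`c(w⊗w) = m v⊗v` (with `r, p, m ≠ 0`) satisfies the braid equation
`(c⊗id)(id⊗c)(c⊗id) = (id⊗c)(c⊗id)(id⊗c)` on `V⊗V⊗V`. -/
theorem stmt8 {k : Type*} [Field k] (r p m : k)
    (hr : r ≠ 0) (hp : p ≠ 0) (hm : m ≠ 0) :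
    cMat 2 (braidC r p m) 3 0 * cMat 2 (braidC r p m) 3 1 * cMat 2 (braidC r p m) 3 0 =
      cMat 2 (braidC r p m) 3 1 * cMat 2 (braidC r p m) 3 0 *
        cMat 2 (braidC r p m) 3 1 := by
  ext w' w
  obtain ⟨a, b, c, rfl⟩ : ∃ a b c, w' = v3 a b c :=
    ⟨w' 0, w' 1, w' 2, by funext i; fin_cases i <;> rfl⟩
  obtain ⟨a', b', c', rfl⟩ : ∃ a b c, w = v3 a b c :=
    ⟨w 0, w 1, w 2, by funext i; fin_cases i <;> rfl⟩
  fin_cases a <;> fin_cases b <;> fin_cases c <;> fin_cases a' <;> fin_cases b' <;>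
    fin_cases c' <;>
  · simp only [Matrix.mul_apply, sum_pi3, cMat0, cMat1, v3_0, v3_1, v3_2,
      Fintype.sum_prod_type, Fin.sum_univ_two]
    simp [braidC, Prod.ext_iff]
    try ring
end

section
/- Let V be the 2-dimensional braided vector space with basis v, w and braiding c(v⊗v) = r w⊗w, c(v⊗w) = p v⊗w, c(w⊗v) = p w⊗v, c(w⊗w) = m v⊗v (r, p, m nonzero scalars). Then (V, c) is of diagonal type (i.e., admits a basis in which the braiding is diagonal) if and only if p² = rm. -/
open Matrix

variable {k : Type*} [Field k]

/-- The matrix (columns = source basis vectors `e_a ⊗ e_b`) of the braiding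
`c(v⊗v) = r w⊗w`, `c(v⊗w) = p v⊗w`, `c(w⊗v) = p w⊗v`, `c(w⊗w) = m v⊗v` on `V ⊗ V`. -/
def braidMx (k : Type*) [Field k] (r p m : k) :
    Matrix (Fin 2 × Fin 2) (Fin 2 × Fin 2) k := fun pOut pIn => braidC r p m pIn pOut

/-- The matrix of a diagonal braiding `c(x_i ⊗ x_j) = q_{ij} x_j ⊗ x_i` on `V ⊗ V`. -/
def diagMx (k : Type*) [Field k] (q : Fin 2 → Fin 2 → k) :
    Matrix (Fin 2 × Fin 2) (Fin 2 × Fin 2) k := fun pOut pIn =>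
  if pOut = (pIn.2, pIn.1) then q pIn.1 pIn.2 else 0

open Kronecker in
/-- The braided vector space with braiding `c(v⊗v) = r w⊗w`, `c(v⊗w) = p v⊗w`,
`c(w⊗v) = p w⊗v`, `c(w⊗w) = m v⊗v` (`r, p, m ≠ 0`) is of diagonal type — i.e. there is
a basis change `B` of `V` in which the braiding becomes `x_i ⊗ x_j ↦ q_{ij} x_j ⊗ x_i` —
if and only if `p² = rm`. -/
theorem stmt9 {k : Type*} [Field k] [IsAlgClosed k] [CharZero k] (r p m : k)
    (hr : r ≠ 0) (hp : p ≠ 0) (hm : m ≠ 0) :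
    (∃ (B : Matrix (Fin 2) (Fin 2) k) (q : Fin 2 → Fin 2 → k), IsUnit B.det ∧
      braidMx k r p m * (B ⊗ₖ B) = (B ⊗ₖ B) * diagMx k q) ↔ p ^ 2 = r * m := by
  constructor
  · rintro ⟨B, q, hdet, hB⟩
    set a := B 0 0 with ha
    set c := B 1 0 with hc
    have E1 := congrFun (congrFun hB ((0 : Fin 2), (0 : Fin 2))) ((0 : Fin 2), (0 : Fin 2))
    have E2 := congrFun (congrFun hB ((0 : Fin 2), (1 : Fin 2))) ((0 : Fin 2), (0 : Fin 2))
    have E3 := congrFun (congrFun hB ((1 : Fin 2), (1 : Fin 2))) ((0 : Fin 2), (0 : Fin 2))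
    simp [Matrix.mul_apply, Fintype.sum_prod_type, Fin.sum_univ_two, braidMx, braidC,
      diagMx, Matrix.kroneckerMap_apply, Prod.ext_iff, ← ha, ← hc] at E1 E2 E3
    have hdet' : B.det ≠ 0 := hdet.ne_zero
    rw [Matrix.det_fin_two] at hdet'
    have hane : a ≠ 0 := by
      intro h0
      rw [h0] at E1
      simp at E1
      rcases E1 with h | h
      · exact hm h
      · exact hdet' (by rw [← ha, ← hc] at *; rw [h0, h]; ring)
    have hcne : c ≠ 0 := by
      intro h0
      rw [h0] at E3
      simp at E3
      rcases E3 with h | h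
      · exact hr h
      · exact hdet' (by rw [← ha, ← hc] at *; rw [h0, h]; ring)
    have hq : q 0 0 = p := mul_left_cancel₀ (mul_ne_zero hane hcne) (by linear_combination -E2)
    rw [hq] at E1 E3
    have key : p ^ 2 * (a * a * (c * c)) = r * m * (a * a * (c * c)) := by
      linear_combination (-(p*c*c))*E1 + (-(m*c*c))*E3
    exact mul_right_cancel₀
      (mul_ne_zero (mul_ne_zero hane hane) (mul_ne_zero hcne hcne)) key
  · intro hpm
    obtain ⟨s, hs⟩ := IsAlgClosed.exists_pow_nat_eq (p / m) (n := 2) (by norm_num)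
    have hsne : s ≠ 0 := by
      intro h0
      rw [h0] at hs
      simp at hs
      exact (div_ne_zero hp hm) hs.symm
    have hp2 : p = s ^ 2 * m := by
      rw [hs]; field_simp
    have hr2 : r = s ^ 2 * (s ^ 2 * m) := by
      apply mul_right_cancel₀ hm
      rw [← hpm, hp2]; ring
    subst hp2 hr2
    refine ⟨!![1, 1; s, -s], fun i j => if i = j then s ^ 2 * m else -(s ^ 2 * m), ?_, ?_⟩
    · rw [isUnit_iff_ne_zero, Matrix.det_fin_two_of]
      intro h
      have : (2 : k) * s = 0 := by linear_combination -h
      rcases mul_eq_zero.1 this with h2 | h2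
      · exact two_ne_zero h2
      · exact hsne h2
    · ext ⟨i1, i2⟩ ⟨j1, j2⟩
      fin_cases i1 <;> fin_cases i2 <;> fin_cases j1 <;> fin_cases j2 <;>
        (try simp [Matrix.mul_apply, Fintype.sum_prod_type, Fin.sum_univ_two, braidMx, braidC,
          diagMx, Matrix.kroneckerMap_apply, Prod.ext_iff]) <;>
        (try first | rfl | tauto | ring)
      all_goals tauto
end

section
/- Let V be the 2-dimensional braided vector space with basis v, w and braiding c(v⊗v) = r w⊗w, c(v⊗w) = v⊗w, c(w⊗v) = w⊗v, c(w⊗w) = m v⊗v (i.e., p = 1). Then for each n, the quantum symmetrizer Ω_n acts on the vector a_n = v⊗w⊗v⊗w⊗⋯ (alternating, n factors) as a nonzero scalar, hence the Nichols algebra B(V) is infinite dimensional. -/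
open Matrix

variable {k : Type*} [Field k]

/-- The alternating word `v ⊗ w ⊗ v ⊗ w ⊗ ⋯` of length `n` (with `v = 0`, `w = 1`). -/
def altw (n : ℕ) : Fin n → Fin 2 := fun j => if (j : ℕ) % 2 = 0 then 0 else 1


section Aux

variable {k : Type*} [Field k] (r m : k)

lemma altw_mk (n j : ℕ) (hj : j < n) :
    altw n ⟨j, hj⟩ = if j % 2 = 0 then 0 else 1 := rfl

lemma braidC01 (b : Fin 2 × Fin 2) (hb : b ≠ ((0 : Fin 2), (1 : Fin 2))) :
    braidC r 1 m (0, 1) b = 0 := by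
  simp only [braidC, Prod.mk.injEq]
  rw [if_neg (by simp), if_neg (by simpa [Prod.ext_iff] using hb),
    if_neg (by simp), if_neg (by simp)]

lemma braidC10 (b : Fin 2 × Fin 2) (hb : b ≠ ((1 : Fin 2), (0 : Fin 2))) :
    braidC r 1 m (1, 0) b = 0 := by
  simp only [braidC, Prod.mk.injEq]
  rw [if_neg (by simp), if_neg (by simp),
    if_neg (by simpa [Prod.ext_iff] using hb), if_neg (by simp)]

lemma cCol (n i : ℕ) (h : i + 1 < n) (w' : Fin n → Fin 2) :
    cMat 2 (braidC r 1 m) n i w' (altw n) = if w' = altw n then 1 else 0 := by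
  unfold cMat
  rw [dif_pos h]
  by_cases hw : w' = altw n
  · subst hw
    rw [if_pos (fun j _ _ => rfl), if_pos rfl]
    rcases Nat.mod_two_eq_zero_or_one i with h0 | h1
    · rw [altw_mk, altw_mk, if_pos h0, if_neg (by omega)]
      simp [braidC]
    · rw [altw_mk, altw_mk, if_neg (by omega), if_pos (by omega)]
      simp [braidC]
  · rw [if_neg hw]
    by_cases hforall : ∀ j : Fin n, (j : ℕ) ≠ i → (j : ℕ) ≠ i + 1 → w' j = altw n j
    · rw [if_pos hforall]
      have key : (w' ⟨i, Nat.lt_of_succ_lt h⟩, w' ⟨i + 1, h⟩) ≠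
          (altw n ⟨i, Nat.lt_of_succ_lt h⟩, altw n ⟨i + 1, h⟩) := by
        intro hc
        apply hw
        funext j
        rcases eq_or_ne (j : ℕ) i with hji | hji
        · have hj : j = ⟨i, Nat.lt_of_succ_lt h⟩ := Fin.ext hji
          rw [hj]; exact congrArg Prod.fst hc
        · rcases eq_or_ne (j : ℕ) (i + 1) with hji1 | hji1
          · have hj : j = ⟨i + 1, h⟩ := Fin.ext hji1
            rw [hj]; exact congrArg Prod.snd hc
          · exact hforall j hji hji1
      rcases Nat.mod_two_eq_zero_or_one i with h0 | h1
      · rw [altw_mk, altw_mk, if_pos h0, if_neg (by omega)] at key ⊢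
        exact braidC01 r m _ (by simpa [Prod.ext_iff] using key)
      · rw [altw_mk, altw_mk, if_neg (by omega), if_pos (by omega)] at key ⊢
        exact braidC10 r m _ (by simpa [Prod.ext_iff] using key)
    · rw [if_neg hforall]

lemma cColVec (n i : ℕ) (h : i + 1 < n) :
    (cMat 2 (braidC r 1 m) n i).mulVec (Pi.single (altw n) 1) =
      (Pi.single (altw n) 1 : (Fin n → Fin 2) → k) := by
  funext w'
  simp only [Matrix.mulVec_single_one, Matrix.col_apply]
  rw [cCol r m n i h w', Pi.single_apply]

lemma omegaUpperCol (n : ℕ) : ∀ j : ℕ, j ≤ n →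
    (OmegaUpper 2 (braidC r 1 m) n j).mulVec (Pi.single (altw (n + 1)) 1) =
      ((j + 1 : ℕ) : k) • (Pi.single (altw (n + 1)) 1 : (Fin (n + 1) → Fin 2) → k)
  | 0, _ => by
    rw [show OmegaUpper 2 (braidC r 1 m) n 0 = 1 from rfl, Matrix.one_mulVec]
    norm_num
  | j + 1, hj => by
    have ih := omegaUpperCol n j (le_of_lt hj)
    show (1 + cMat 2 (braidC r 1 m) (n + 1) j *
        OmegaUpper 2 (braidC r 1 m) n j).mulVec _ = _
    rw [Matrix.add_mulVec, Matrix.one_mulVec, ← Matrix.mulVec_mulVec, ih,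
      Matrix.mulVec_smul, cColVec r m (n + 1) j (by omega)]
    rw [show ((j + 1 + 1 : ℕ) : k) = ((j + 1 : ℕ) : k) + 1 by push_cast; ring,
      add_smul, one_smul]
    exact add_comm _ _

lemma init_altw (n : ℕ) : Fin.init (altw (n + 1)) = altw n := rfl

lemma extCol (n : ℕ) (M : Matrix (Fin n → Fin 2) (Fin n → Fin 2) k) (κ : k)
    (hM : M.mulVec (Pi.single (altw n) 1) =
      κ • (Pi.single (altw n) 1 : (Fin n → Fin 2) → k)) :
    (extMat 2 n M).mulVec (Pi.single (altw (n + 1)) 1) =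
      κ • (Pi.single (altw (n + 1)) 1 : (Fin (n + 1) → Fin 2) → k) := by
  have hM' : ∀ u, M u (altw n) = κ * (if u = altw n then 1 else 0) := by
    intro u
    have h := congrFun hM u
    simpa [Matrix.mulVec_single, Pi.single_apply] using h
  funext w'
  simp only [Matrix.mulVec_single_one, Matrix.col_apply]
  show (if w' (Fin.last n) = altw (n + 1) (Fin.last n) then (1 : k) else 0) *
      M (Fin.init w') (Fin.init (altw (n + 1))) = _
  rw [init_altw, hM', Pi.smul_apply, Pi.single_apply, smul_eq_mul]
  by_cases hw : w' = altw (n + 1)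
  · subst hw
    rw [if_pos (init_altw n), if_pos rfl, if_pos rfl]
    ring
  · rw [if_neg hw, mul_zero]
    by_cases hl : w' (Fin.last n) = altw (n + 1) (Fin.last n)
    · have hi : Fin.init w' ≠ altw n := by
        intro hi
        apply hw
        rw [← Fin.snoc_init_self w', ← Fin.snoc_init_self (altw (n + 1)), hi, hl, init_altw]
      rw [if_pos hl, if_neg hi]
      ring
    · rw [if_neg hl]
      ring

lemma omegaCol (n : ℕ) :
    (Omega 2 (braidC r 1 m) n).mulVec (Pi.single (altw n) 1) =
      ((Nat.factorial n) : k) • (Pi.single (altw n) 1 : (Fin n → Fin 2) → k) := by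
  induction n with
  | zero =>
    show (1 : Matrix (Fin 0 → Fin 2) (Fin 0 → Fin 2) k).mulVec _ = _
    rw [Matrix.one_mulVec]
    simp [Nat.factorial]
  | succ n ih =>
    show (extMat 2 n (Omega 2 (braidC r 1 m) n) *
        OmegaUpper 2 (braidC r 1 m) n n).mulVec _ = _
    rw [← Matrix.mulVec_mulVec, omegaUpperCol r m n n le_rfl, Matrix.mulVec_smul,
      extCol n _ _ ih, smul_smul]
    congr 1
    rw [Nat.factorial_succ]
    push_cast
    ring

end Aux

/-- For the braiding `c(v⊗v) = r w⊗w`, `c(v⊗w) = v⊗w`, `c(w⊗v) = w⊗v`,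
`c(w⊗w) = m v⊗v` (the case `p = 1`, `r, m ≠ 0`), every quantum symmetrizer `Ω_n` sends
the alternating basis vector `a_n = v⊗w⊗v⊗w⊗⋯` to a nonzero scalar multiple of itself;
in particular `Ω_n ≠ 0` for all `n`, so the Nichols algebra is infinite dimensional. -/
theorem stmt10 {k : Type*} [Field k] [CharZero k] (r m : k) (hr : r ≠ 0) (hm : m ≠ 0) :
    (∀ n : ℕ, ∃ κ : k, κ ≠ 0 ∧
      (Omega 2 (braidC r 1 m) n).mulVec (Pi.single (altw n) 1 : (Fin n → Fin 2) → k) =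
        κ • (Pi.single (altw n) 1 : (Fin n → Fin 2) → k)) ∧
    (∀ n : ℕ, (Omega 2 (braidC r 1 m) n).rank ≠ 0) ∧
    ¬ ∃ D : ℕ, NicholsHasDim 2 (braidC r 1 m) D := by
  have hrank : ∀ n : ℕ, (Omega 2 (braidC r 1 m) n).rank ≠ 0 := by
    intro n h0
    have hbot : LinearMap.range (Omega 2 (braidC r 1 m) n).mulVecLin = ⊥ :=
      Submodule.finrank_eq_zero.mp h0
    have hzero : (Omega 2 (braidC r 1 m) n).mulVecLin = 0 :=
      LinearMap.range_eq_bot.mp hbot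
    have h1 := omegaCol r m n
    have h2 : (Omega 2 (braidC r 1 m) n).mulVec (Pi.single (altw n) 1) = 0 := by
      rw [← Matrix.mulVecLin_apply, hzero]; rfl
    rw [h2] at h1
    have h3 := congrFun h1.symm (altw n)
    rw [Pi.smul_apply, Pi.single_eq_same, smul_eq_mul, mul_one] at h3
    exact Nat.cast_ne_zero.mpr (Nat.factorial_ne_zero n) h3
  refine ⟨fun n => ⟨((Nat.factorial n) : k),
    Nat.cast_ne_zero.mpr (Nat.factorial_ne_zero n), omegaCol r m n⟩, hrank, ?_⟩
  rintro ⟨D, N, h1, -⟩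
  exact hrank N (h1 N le_rfl)
end

section
/- In the 16-dimensional Hopf algebra H = H_{c:σ₀}, the antipode satisfies: S(e_1 t) = e_1 t, S(e_y t) = e_y t, S(e_{xy} t) = e_{x³} t, S(e_{x³} t) = e_{xy} t, S(e_x t) = -e_{x³y} t, S(e_{x²} t) = -e_{x²} t, S(e_{x²y} t) = -e_{x²y} t, and S(e_{x³y} t) = -e_x t. -/
variable {k : Type*} [Field k]

/-- The group `G = Z/4 × Z/2` written additively: `x = (1,0)`, `y = (0,1)`. -/
abbrev GG := ZMod 4 × ZMod 2

/-- The action `g ↦ g ◁ t` on `G`, determined by `x ◁ t = xy`, `y ◁ t = y`. -/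
def actT (g : GG) : GG := (g.1, g.2 + (g.1.val : ZMod 2))

/-- `σ(x^i y^j; t, t) = (-1)^{i(i-1)/2}`. -/
def sigma0 (g : GG) : k := (-1 : k) ^ (g.1.val * (g.1.val - 1) / 2)

/-- `τ(x^i y^j, x^k y^l; t) = (-1)^{jk}`. -/
def tau0 (g h : GG) : k := (-1 : k) ^ (g.2.val * h.1.val)

/-- The underlying vector space of `H = H_{c:σ₀}`, with basis `e_g = δ_{(g,false)}`,
`e_g t = δ_{(g,true)}`. -/
abbrev HH (k : Type*) := GG × Bool → k

/-- Multiplication of `H`: `(e_g t^a)(e_h t^b) = δ_{g◁t^a,h} σ_{a,b}(g) e_g t^{a+b}`,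
where `σ_{a,b}(g) = σ(g;t,t)` if `a = b = t` and `1` otherwise. -/
def mulH (f1 f2 : HH k) : HH k := fun p =>
  ∑ a : Bool, ∑ b : Bool,
    if xor a b = p.2 then
      (if a && b then sigma0 p.1 else 1) * f1 (p.1, a) *
        f2 ((if a then actT p.1 else p.1), b)
    else 0

/-- The unit `1 = Σ_g e_g` of `H`. -/
def oneH : HH k := fun p => if p.2 = false then 1 else 0

/-- The element `t = Σ_g e_g t` of `H`. -/
def tH : HH k := fun p => if p.2 = true then 1 else 0

/-- The basis element `e_g t` of `H`. -/
def eT (g : GG) : HH k := fun p => if p.2 = true ∧ p.1 = g then 1 else 0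

/-- The dual basis element `ζ_g ∈ H^*` (dual to `e_g`). -/
def zetaS (g : GG) : HH k := fun p => if p.2 = false ∧ p.1 = g then 1 else 0

/-- The dual basis element `χ_g ∈ H^*` (dual to `e_g t`). -/
def chiS (g : GG) : HH k := fun p => if p.2 = true ∧ p.1 = g then 1 else 0

/-- Multiplication of `H^*`, dual to the comultiplication
`Δ(e_g) = Σ_{hk=g} e_h ⊗ e_k`, `Δ(e_g t) = Σ_{hk=g} τ(h,k;t) (e_h t) ⊗ (e_k t)`. -/
def mulHS (f1 f2 : HH k) : HH k := fun p =>
  if p.2 then ∑ h : GG, tau0 h (p.1 - h) * f1 (h, true) * f2 (p.1 - h, true)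
  else ∑ h : GG, f1 (h, false) * f2 (p.1 - h, false)


/-- The antipode formula
`S(e_g t) = σ(g⁻¹; t, t)⁻¹ τ(g, g⁻¹; t)⁻¹ e_{(g◁t)⁻¹} t`, as an element of `H`. -/
def STform (g : GG) : HH k := fun p =>
  if p.2 = true ∧ p.1 = -(actT g) then (sigma0 (-g) * tau0 g (-g) : k)⁻¹ else 0

lemma keyP {k : Type*} [Field k] (g a : GG) (h1 : -(actT g) = a)
    (h2 : (sigma0 (-g) * tau0 g (-g) : k)⁻¹ = 1) : STform g = (eT a : HH k) := by
  funext p; simp only [STform, eT, h1, h2]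

lemma keyN {k : Type*} [Field k] (g a : GG) (h1 : -(actT g) = a)
    (h2 : (sigma0 (-g) * tau0 g (-g) : k)⁻¹ = -1) : STform g = -(eT a : HH k) := by
  funext p; simp only [STform, eT, Pi.neg_apply, h1, h2]
  split_ifs <;> norm_num

/-- The antipode of `H = H_{c:σ₀}` satisfies `S(e_1 t) = e_1 t`, `S(e_y t) = e_y t`,
`S(e_{xy} t) = e_{x³} t`, `S(e_{x³} t) = e_{xy} t`, `S(e_x t) = -e_{x³y} t`,
`S(e_{x²} t) = -e_{x²} t`, `S(e_{x²y} t) = -e_{x²y} t`, `S(e_{x³y} t) = -e_x t`. -/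
theorem stmt14 {k : Type*} [Field k] [CharZero k] :
    STform ((0 : ZMod 4), (0 : ZMod 2)) = (eT ((0 : ZMod 4), (0 : ZMod 2)) : HH k) ∧
    STform ((0 : ZMod 4), (1 : ZMod 2)) = (eT ((0 : ZMod 4), (1 : ZMod 2)) : HH k) ∧
    STform ((1 : ZMod 4), (1 : ZMod 2)) = (eT ((3 : ZMod 4), (0 : ZMod 2)) : HH k) ∧
    STform ((3 : ZMod 4), (0 : ZMod 2)) = (eT ((1 : ZMod 4), (1 : ZMod 2)) : HH k) ∧
    STform ((1 : ZMod 4), (0 : ZMod 2)) = -(eT ((3 : ZMod 4), (1 : ZMod 2)) : HH k) ∧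
    STform ((2 : ZMod 4), (0 : ZMod 2)) = -(eT ((2 : ZMod 4), (0 : ZMod 2)) : HH k) ∧
    STform ((2 : ZMod 4), (1 : ZMod 2)) = -(eT ((2 : ZMod 4), (1 : ZMod 2)) : HH k) ∧
    STform ((3 : ZMod 4), (1 : ZMod 2)) = -(eT ((1 : ZMod 4), (0 : ZMod 2)) : HH k) := by
  refine ⟨?_, ?_, ?_, ?_, ?_, ?_, ?_, ?_⟩
  · exact keyP _ ((0 : ZMod 4), (0 : ZMod 2)) (by decide)
      (by norm_num [sigma0, tau0,
          show ((-1 : ZMod 4)).val = 3 by decide, show ((-2 : ZMod 4)).val = 2 by decide,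
          show ((-3 : ZMod 4)).val = 1 by decide, show ((-1 : ZMod 2)).val = 1 by decide,
                  show ((-((0 : ZMod 4), (0 : ZMod 2)):GG)).1.val = 0 from rfl,
        show ((((0 : ZMod 4), (0 : ZMod 2)):GG)).2.val = 0 from rfl])
  · exact keyP _ ((0 : ZMod 4), (1 : ZMod 2)) (by decide)
      (by norm_num [sigma0, tau0,
          show ((-1 : ZMod 4)).val = 3 by decide, show ((-2 : ZMod 4)).val = 2 by decide,
          show ((-3 : ZMod 4)).val = 1 by decide, show ((-1 : ZMod 2)).val = 1 by decide,
                  show ((-((0 : ZMod 4), (1 : ZMod 2)):GG)).1.val = 0 from rfl,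
        show ((((0 : ZMod 4), (1 : ZMod 2)):GG)).2.val = 1 from rfl])
  · exact keyP _ ((3 : ZMod 4), (0 : ZMod 2)) (by decide)
      (by norm_num [sigma0, tau0,
          show ((-1 : ZMod 4)).val = 3 by decide, show ((-2 : ZMod 4)).val = 2 by decide,
          show ((-3 : ZMod 4)).val = 1 by decide, show ((-1 : ZMod 2)).val = 1 by decide,
                  show ((-((1 : ZMod 4), (1 : ZMod 2)):GG)).1.val = 3 from rfl,
        show ((((1 : ZMod 4), (1 : ZMod 2)):GG)).2.val = 1 from rfl])
  · exact keyP _ ((1 : ZMod 4), (1 : ZMod 2)) (by decide)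
      (by norm_num [sigma0, tau0,
          show ((-1 : ZMod 4)).val = 3 by decide, show ((-2 : ZMod 4)).val = 2 by decide,
          show ((-3 : ZMod 4)).val = 1 by decide, show ((-1 : ZMod 2)).val = 1 by decide,
                  show ((-((3 : ZMod 4), (0 : ZMod 2)):GG)).1.val = 1 from rfl,
        show ((((3 : ZMod 4), (0 : ZMod 2)):GG)).2.val = 0 from rfl])
  · exact keyN _ ((3 : ZMod 4), (1 : ZMod 2)) (by decide)
      (by norm_num [sigma0, tau0,
          show ((-1 : ZMod 4)).val = 3 by decide, show ((-2 : ZMod 4)).val = 2 by decide,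
          show ((-3 : ZMod 4)).val = 1 by decide, show ((-1 : ZMod 2)).val = 1 by decide,
                  show ((-((1 : ZMod 4), (0 : ZMod 2)):GG)).1.val = 3 from rfl,
        show ((((1 : ZMod 4), (0 : ZMod 2)):GG)).2.val = 0 from rfl])
  · exact keyN _ ((2 : ZMod 4), (0 : ZMod 2)) (by decide)
      (by norm_num [sigma0, tau0,
          show ((-1 : ZMod 4)).val = 3 by decide, show ((-2 : ZMod 4)).val = 2 by decide,
          show ((-3 : ZMod 4)).val = 1 by decide, show ((-1 : ZMod 2)).val = 1 by decide,
                  show ((-((2 : ZMod 4), (0 : ZMod 2)):GG)).1.val = 2 from rfl,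
        show ((((2 : ZMod 4), (0 : ZMod 2)):GG)).2.val = 0 from rfl])
  · exact keyN _ ((2 : ZMod 4), (1 : ZMod 2)) (by decide)
      (by norm_num [sigma0, tau0,
          show ((-1 : ZMod 4)).val = 3 by decide, show ((-2 : ZMod 4)).val = 2 by decide,
          show ((-3 : ZMod 4)).val = 1 by decide, show ((-1 : ZMod 2)).val = 1 by decide,
                  show ((-((2 : ZMod 4), (1 : ZMod 2)):GG)).1.val = 2 from rfl,
        show ((((2 : ZMod 4), (1 : ZMod 2)):GG)).2.val = 1 from rfl])
  · exact keyN _ ((1 : ZMod 4), (0 : ZMod 2)) (by decide)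
      (by norm_num [sigma0, tau0,
          show ((-1 : ZMod 4)).val = 3 by decide, show ((-2 : ZMod 4)).val = 2 by decide,
          show ((-3 : ZMod 4)).val = 1 by decide, show ((-1 : ZMod 2)).val = 1 by decide,
                  show ((-((3 : ZMod 4), (1 : ZMod 2)):GG)).1.val = 1 from rfl,
        show ((((3 : ZMod 4), (1 : ZMod 2)):GG)).2.val = 1 from rfl])
end

section
/- Let ξ be a primitive 4th root of unity and V the 2-dimensional braided vector space of diagonal type with braiding matrix q = [[ξ², ξ²],[-ξ², ξ²]] = [[-1,-1],[1,-1]]. Then the associated Nichols algebra B(V) is of Cartan type A₂ and has dimension 8. -/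
open Matrix

variable {k : Type*} [Field k]

/-- The braiding matrix `q = [[ξ², ξ²], [-ξ², ξ²]] = [[-1,-1],[1,-1]]`. -/
def qA2 (k : Type*) [Field k] : Fin 2 → Fin 2 → k := ![![-1, -1], ![1, -1]]


namespace NicholsA2

/-- binary encoding of a word -/
def enc : {n : ℕ} → (Fin n → Fin 2) → ℕ
  | 0, _ => 0
  | _ + 1, w => (w 0).val + 2 * enc (fun i => w i.succ)

def qZ : Fin 2 → Fin 2 → ℤ := ![![-1, -1], ![1, -1]]

def CZ : (Fin 2 × Fin 2) → (Fin 2 × Fin 2) → ℤ :=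
  fun a b => if b = (a.2, a.1) then qZ a.1 a.2 else 0

def cMatZ (n i : ℕ) : Matrix (Fin n → Fin 2) (Fin n → Fin 2) ℤ := fun w' w =>
  if h : i + 1 < n then
    if ∀ j : Fin n, (j : ℕ) ≠ i → (j : ℕ) ≠ i + 1 → w' j = w j then
      CZ (w ⟨i, Nat.lt_of_succ_lt h⟩, w ⟨i + 1, h⟩)
        (w' ⟨i, Nat.lt_of_succ_lt h⟩, w' ⟨i + 1, h⟩)
    else 0
  else 0

def OmegaUpperZ (n : ℕ) :
    ℕ → Matrix (Fin (n + 1) → Fin 2) (Fin (n + 1) → Fin 2) ℤ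
  | 0 => 1
  | m + 1 => 1 + cMatZ (n + 1) m * OmegaUpperZ n m

def extMatZ (n : ℕ) (M : Matrix (Fin n → Fin 2) (Fin n → Fin 2) ℤ) :
    Matrix (Fin (n + 1) → Fin 2) (Fin (n + 1) → Fin 2) ℤ := fun w' w =>
  (if w' (Fin.last n) = w (Fin.last n) then 1 else 0) * M (Fin.init w') (Fin.init w)

def OmegaZ : (n : ℕ) → Matrix (Fin n → Fin 2) (Fin n → Fin 2) ℤ
  | 0 => 1
  | n + 1 => extMatZ n (OmegaZ n) * OmegaUpperZ n n

def LOU11 : Matrix (Fin 2 → Fin 2) (Fin 2 → Fin 2) ℤ := fun w' w =>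
    if enc w' = 2 then (if enc w = 2 then (1:ℤ) else (if enc w = 1 then (1:ℤ) else 0)) else
    if enc w' = 1 then (if enc w = 2 then (-1:ℤ) else (if enc w = 1 then (1:ℤ) else 0)) else
    0

def AZ2 : Matrix (Fin 2 → Fin 2) (Fin 2) ℤ := fun a b =>
  if enc a = 2 then (if b = (0:Fin 2) then (1:ℤ) else (if b = (1:Fin 2) then (1:ℤ) else 0)) else
  if enc a = 1 then (if b = (0:Fin 2) then (-1:ℤ) else (if b = (1:Fin 2) then (1:ℤ) else 0)) else
  0

def BZ2 : Matrix (Fin 2) (Fin 2 → Fin 2) ℤ := fun a b =>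
  if a = (0:Fin 2) then (if enc b = 2 then (1:ℤ) else 0) else
  if a = (1:Fin 2) then (if enc b = 1 then (1:ℤ) else 0) else
  0

def PZ2 : Matrix (Fin 2) (Fin 2 → Fin 2) ℤ := fun a b =>
  if a = (0:Fin 2) then (if enc b = 2 then (1:ℤ) else 0) else
  if a = (1:Fin 2) then (if enc b = 1 then (1:ℤ) else 0) else
  0

def QZ2 : Matrix (Fin 2 → Fin 2) (Fin 2) ℤ := fun a b =>
  if enc a = 2 then (if b = (0:Fin 2) then (1:ℤ) else 0) else
  if enc a = 1 then (if b = (1:Fin 2) then (1:ℤ) else 0) else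
  0

def SZ2 : Matrix (Fin 2) (Fin 2) ℤ := !![1, 1; -1, 1]
-- det 2

def APZ2 : Matrix (Fin 3 → Fin 2) (Fin 4) ℤ := fun a b =>
  if enc a = 2 then (if b = (0:Fin 4) then (1:ℤ) else (if b = (2:Fin 4) then (1:ℤ) else 0)) else
  if enc a = 6 then (if b = (1:Fin 4) then (1:ℤ) else (if b = (3:Fin 4) then (1:ℤ) else 0)) else
  if enc a = 1 then (if b = (0:Fin 4) then (-1:ℤ) else (if b = (2:Fin 4) then (1:ℤ) else 0)) else
  if enc a = 5 then (if b = (1:Fin 4) then (-1:ℤ) else (if b = (3:Fin 4) then (1:ℤ) else 0)) else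
  0

def RZ20 : Matrix (Fin 4) (Fin 3 → Fin 2) ℤ := fun a b =>
  if a = (0:Fin 4) then (if enc b = 2 then (1:ℤ) else 0) else
  if a = (1:Fin 4) then (if enc b = 6 then (1:ℤ) else 0) else
  if a = (2:Fin 4) then (if enc b = 1 then (1:ℤ) else 0) else
  if a = (3:Fin 4) then (if enc b = 5 then (1:ℤ) else 0) else
  0

def RZ21 : Matrix (Fin 4) (Fin 3 → Fin 2) ℤ := fun a b =>
  if a = (0:Fin 4) then (if enc b = 4 then (-1:ℤ) else 0) else
  if a = (1:Fin 4) then (if enc b = 6 then (-1:ℤ) else 0) else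
  if a = (2:Fin 4) then (if enc b = 1 then (-1:ℤ) else 0) else
  if a = (3:Fin 4) then (if enc b = 3 then (1:ℤ) else 0) else
  0

def RZ22 : Matrix (Fin 4) (Fin 3 → Fin 2) ℤ := fun a b =>
  if a = (0:Fin 4) then (if enc b = 4 then (1:ℤ) else 0) else
  if a = (1:Fin 4) then (if enc b = 5 then (-1:ℤ) else 0) else
  if a = (2:Fin 4) then (if enc b = 2 then (1:ℤ) else 0) else
  if a = (3:Fin 4) then (if enc b = 3 then (-1:ℤ) else 0) else
  0

def SMZ2 : Matrix (Fin 4) (Fin 3 → Fin 2) ℤ := fun a b =>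
  if a = (0:Fin 4) then (if enc b = 2 then (1:ℤ) else 0) else
  if a = (1:Fin 4) then (if enc b = 5 then (-1:ℤ) else 0) else
  if a = (2:Fin 4) then (if enc b = 2 then (1:ℤ) else 0) else
  if a = (3:Fin 4) then (if enc b = 5 then (1:ℤ) else 0) else
  0

def AZ3 : Matrix (Fin 3 → Fin 2) (Fin 2) ℤ := fun a b =>
  if enc a = 2 then (if b = (0:Fin 2) then (2:ℤ) else 0) else
  if enc a = 5 then (if b = (1:Fin 2) then (2:ℤ) else 0) else
  0

def BZ3 : Matrix (Fin 2) (Fin 3 → Fin 2) ℤ := fun a b =>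
  if a = (0:Fin 2) then (if enc b = 2 then (1:ℤ) else 0) else
  if a = (1:Fin 2) then (if enc b = 5 then (1:ℤ) else 0) else
  0

def PZ3 : Matrix (Fin 2) (Fin 3 → Fin 2) ℤ := fun a b =>
  if a = (0:Fin 2) then (if enc b = 2 then (1:ℤ) else 0) else
  if a = (1:Fin 2) then (if enc b = 5 then (1:ℤ) else 0) else
  0

def QZ3 : Matrix (Fin 3 → Fin 2) (Fin 2) ℤ := fun a b =>
  if enc a = 2 then (if b = (0:Fin 2) then (1:ℤ) else 0) else
  if enc a = 5 then (if b = (1:Fin 2) then (1:ℤ) else 0) else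
  0

def SZ3 : Matrix (Fin 2) (Fin 2) ℤ := !![2, 0; 0, 2]
-- det 4

def APZ3 : Matrix (Fin 4 → Fin 2) (Fin 4) ℤ := fun a b =>
  if enc a = 2 then (if b = (0:Fin 4) then (2:ℤ) else 0) else
  if enc a = 10 then (if b = (1:Fin 4) then (2:ℤ) else 0) else
  if enc a = 5 then (if b = (2:Fin 4) then (2:ℤ) else 0) else
  if enc a = 13 then (if b = (3:Fin 4) then (2:ℤ) else 0) else
  0

def RZ30 : Matrix (Fin 4) (Fin 4 → Fin 2) ℤ := fun a b =>
  if a = (0:Fin 4) then (if enc b = 2 then (1:ℤ) else 0) else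
  if a = (1:Fin 4) then (if enc b = 10 then (1:ℤ) else 0) else
  if a = (2:Fin 4) then (if enc b = 5 then (1:ℤ) else 0) else
  if a = (3:Fin 4) then (if enc b = 13 then (1:ℤ) else 0) else
  0

def RZ31 : Matrix (Fin 4) (Fin 4 → Fin 2) ℤ := fun a b =>
  if a = (0:Fin 4) then (if enc b = 2 then (-1:ℤ) else 0) else
  if a = (1:Fin 4) then (if enc b = 6 then (1:ℤ) else 0) else
  if a = (2:Fin 4) then (if enc b = 9 then (-1:ℤ) else 0) else
  if a = (3:Fin 4) then (if enc b = 13 then (-1:ℤ) else 0) else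
  0

def RZ32 : Matrix (Fin 4) (Fin 4 → Fin 2) ℤ := fun a b =>
  if a = (0:Fin 4) then (if enc b = 4 then (1:ℤ) else 0) else
  if a = (1:Fin 4) then (if enc b = 6 then (-1:ℤ) else 0) else
  if a = (2:Fin 4) then (if enc b = 9 then (1:ℤ) else 0) else
  if a = (3:Fin 4) then (if enc b = 11 then (-1:ℤ) else 0) else
  0

def RZ33 : Matrix (Fin 4) (Fin 4 → Fin 2) ℤ := fun a b =>
  if a = (0:Fin 4) then (if enc b = 4 then (-1:ℤ) else 0) else
  if a = (1:Fin 4) then (if enc b = 5 then (-1:ℤ) else 0) else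
  if a = (2:Fin 4) then (if enc b = 10 then (-1:ℤ) else 0) else
  if a = (3:Fin 4) then (if enc b = 11 then (1:ℤ) else 0) else
  0

def SMZ3 : Matrix (Fin 4) (Fin 4 → Fin 2) ℤ := fun a b =>
  if a = (1:Fin 4) then (if enc b = 10 then (1:ℤ) else (if enc b = 5 then (-1:ℤ) else 0)) else
  if a = (2:Fin 4) then (if enc b = 10 then (-1:ℤ) else (if enc b = 5 then (1:ℤ) else 0)) else
  0

def AZ4 : Matrix (Fin 4 → Fin 2) (Fin 1) ℤ := fun a b =>
  if enc a = 10 then (if b = (0:Fin 1) then (2:ℤ) else 0) else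
  if enc a = 5 then (if b = (0:Fin 1) then (-2:ℤ) else 0) else
  0

def BZ4 : Matrix (Fin 1) (Fin 4 → Fin 2) ℤ := fun a b =>
  if a = (0:Fin 1) then (if enc b = 10 then (1:ℤ) else (if enc b = 5 then (-1:ℤ) else 0)) else
  0

def PZ4 : Matrix (Fin 1) (Fin 4 → Fin 2) ℤ := fun a b =>
  if a = (0:Fin 1) then (if enc b = 10 then (1:ℤ) else 0) else
  0

def QZ4 : Matrix (Fin 4 → Fin 2) (Fin 1) ℤ := fun a b =>
  if enc a = 10 then (if b = (0:Fin 1) then (1:ℤ) else 0) else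
  0

def SZ4 : Matrix (Fin 1) (Fin 1) ℤ := !![2]
-- det 2

def APZ4 : Matrix (Fin 5 → Fin 2) (Fin 2) ℤ := fun a b =>
  if enc a = 10 then (if b = (0:Fin 2) then (2:ℤ) else 0) else
  if enc a = 26 then (if b = (1:Fin 2) then (2:ℤ) else 0) else
  if enc a = 5 then (if b = (0:Fin 2) then (-2:ℤ) else 0) else
  if enc a = 21 then (if b = (1:Fin 2) then (-2:ℤ) else 0) else
  0

def RZ40 : Matrix (Fin 2) (Fin 5 → Fin 2) ℤ := fun a b =>
  if a = (0:Fin 2) then (if enc b = 10 then (1:ℤ) else (if enc b = 5 then (-1:ℤ) else 0)) else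
  if a = (1:Fin 2) then (if enc b = 26 then (1:ℤ) else (if enc b = 21 then (-1:ℤ) else 0)) else
  0

def RZ41 : Matrix (Fin 2) (Fin 5 → Fin 2) ℤ := fun a b =>
  if a = (0:Fin 2) then (if enc b = 18 then (-1:ℤ) else (if enc b = 5 then (1:ℤ) else 0)) else
  if a = (1:Fin 2) then (if enc b = 26 then (-1:ℤ) else (if enc b = 13 then (-1:ℤ) else 0)) else
  0

def RZ42 : Matrix (Fin 2) (Fin 5 → Fin 2) ℤ := fun a b =>
  if a = (0:Fin 2) then (if enc b = 18 then (1:ℤ) else (if enc b = 9 then (-1:ℤ) else 0)) else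
  if a = (1:Fin 2) then (if enc b = 22 then (-1:ℤ) else (if enc b = 13 then (1:ℤ) else 0)) else
  0

def RZ43 : Matrix (Fin 2) (Fin 5 → Fin 2) ℤ := fun a b =>
  if a = (0:Fin 2) then (if enc b = 20 then (-1:ℤ) else (if enc b = 9 then (1:ℤ) else 0)) else
  if a = (1:Fin 2) then (if enc b = 22 then (1:ℤ) else (if enc b = 11 then (1:ℤ) else 0)) else
  0

def RZ44 : Matrix (Fin 2) (Fin 5 → Fin 2) ℤ := fun a b =>
  if a = (0:Fin 2) then (if enc b = 20 then (1:ℤ) else (if enc b = 10 then (-1:ℤ) else 0)) else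
  if a = (1:Fin 2) then (if enc b = 21 then (1:ℤ) else (if enc b = 11 then (-1:ℤ) else 0)) else
  0

def SMZ4 : Matrix (Fin 2) (Fin 5 → Fin 2) ℤ := fun a b =>
  0

def LOm2 : Matrix (Fin 2 → Fin 2) (Fin 2 → Fin 2) ℤ := fun a b =>
  if enc a = 2 then (if enc b = 2 then (1:ℤ) else (if enc b = 1 then (1:ℤ) else 0)) else
  if enc a = 1 then (if enc b = 2 then (-1:ℤ) else (if enc b = 1 then (1:ℤ) else 0)) else
  0

def LOm3 : Matrix (Fin 3 → Fin 2) (Fin 3 → Fin 2) ℤ := fun a b =>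
  if enc a = 2 then (if enc b = 2 then (2:ℤ) else 0) else
  if enc a = 5 then (if enc b = 5 then (2:ℤ) else 0) else
  0

def LOm4 : Matrix (Fin 4 → Fin 2) (Fin 4 → Fin 2) ℤ := fun a b =>
  if enc a = 10 then (if enc b = 10 then (2:ℤ) else (if enc b = 5 then (-2:ℤ) else 0)) else
  if enc a = 5 then (if enc b = 10 then (-2:ℤ) else (if enc b = 5 then (2:ℤ) else 0)) else
  0

set_option maxHeartbeats 1000000 in
theorem hOm1 : OmegaZ 1 = 1 := by decide
set_option maxHeartbeats 1000000 in
theorem hOU11 : OmegaUpperZ 1 1 = LOU11 := by decide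
set_option maxHeartbeats 1000000 in
theorem hOm2 : OmegaZ 2 = LOm2 := by
  rw [show OmegaZ 2 = extMatZ 1 (OmegaZ 1) * OmegaUpperZ 1 1 from rfl, hOm1, hOU11]; decide
set_option maxHeartbeats 1000000 in
theorem hE2 : extMatZ 2 LOm2 = APZ2 * RZ20 := by decide
set_option maxHeartbeats 1000000 in
theorem hR21 : RZ20 * cMatZ 3 1 = RZ21 := by decide
set_option maxHeartbeats 1000000 in
theorem hR22 : RZ21 * cMatZ 3 0 = RZ22 := by decide
set_option maxHeartbeats 1000000 in
theorem hS2 : RZ20 + (RZ21 + RZ22) = SMZ2 := by decide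
theorem key2 : RZ20 * OmegaUpperZ 2 2 = SMZ2 := by
  rw [show OmegaUpperZ 2 2 = 1 + cMatZ 3 1 * OmegaUpperZ 2 1 from rfl,
    Matrix.mul_add, Matrix.mul_one, ← Matrix.mul_assoc, hR21,
    show OmegaUpperZ 2 1 = 1 + cMatZ 3 0 * OmegaUpperZ 2 0 from rfl,
    Matrix.mul_add, Matrix.mul_one, ← Matrix.mul_assoc, hR22,
    show OmegaUpperZ 2 0 = 1 from rfl, Matrix.mul_one, hS2]
set_option maxHeartbeats 1000000 in
theorem hOm3 : OmegaZ 3 = LOm3 := by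
  rw [show OmegaZ 3 = extMatZ 2 (OmegaZ 2) * OmegaUpperZ 2 2 from rfl, hOm2, hE2,
    Matrix.mul_assoc _ _ _, key2]
  decide
set_option maxHeartbeats 1000000 in
theorem hE3 : extMatZ 3 LOm3 = APZ3 * RZ30 := by decide
set_option maxHeartbeats 1000000 in
theorem hR31 : RZ30 * cMatZ 4 2 = RZ31 := by decide
set_option maxHeartbeats 1000000 in
theorem hR32 : RZ31 * cMatZ 4 1 = RZ32 := by decide
set_option maxHeartbeats 1000000 in
theorem hR33 : RZ32 * cMatZ 4 0 = RZ33 := by decide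
set_option maxHeartbeats 1000000 in
theorem hS3 : RZ30 + (RZ31 + (RZ32 + RZ33)) = SMZ3 := by decide
theorem key3 : RZ30 * OmegaUpperZ 3 3 = SMZ3 := by
  rw [show OmegaUpperZ 3 3 = 1 + cMatZ 4 2 * OmegaUpperZ 3 2 from rfl,
    Matrix.mul_add, Matrix.mul_one, ← Matrix.mul_assoc, hR31,
    show OmegaUpperZ 3 2 = 1 + cMatZ 4 1 * OmegaUpperZ 3 1 from rfl,
    Matrix.mul_add, Matrix.mul_one, ← Matrix.mul_assoc, hR32,
    show OmegaUpperZ 3 1 = 1 + cMatZ 4 0 * OmegaUpperZ 3 0 from rfl,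
    Matrix.mul_add, Matrix.mul_one, ← Matrix.mul_assoc, hR33,
    show OmegaUpperZ 3 0 = 1 from rfl, Matrix.mul_one, hS3]
set_option maxHeartbeats 1000000 in
theorem hOm4 : OmegaZ 4 = LOm4 := by
  rw [show OmegaZ 4 = extMatZ 3 (OmegaZ 3) * OmegaUpperZ 3 3 from rfl, hOm3, hE3,
    Matrix.mul_assoc _ _ _, key3]
  decide
set_option maxHeartbeats 1000000 in
theorem hE4 : extMatZ 4 LOm4 = APZ4 * RZ40 := by decide
set_option maxHeartbeats 1000000 in
theorem hR41 : RZ40 * cMatZ 5 3 = RZ41 := by decide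
set_option maxHeartbeats 1000000 in
theorem hR42 : RZ41 * cMatZ 5 2 = RZ42 := by decide
set_option maxHeartbeats 1000000 in
theorem hR43 : RZ42 * cMatZ 5 1 = RZ43 := by decide
set_option maxHeartbeats 1000000 in
theorem hR44 : RZ43 * cMatZ 5 0 = RZ44 := by decide
set_option maxHeartbeats 1000000 in
theorem hS4 : RZ40 + (RZ41 + (RZ42 + (RZ43 + RZ44))) = SMZ4 := by decide
theorem key4 : RZ40 * OmegaUpperZ 4 4 = SMZ4 := by
  rw [show OmegaUpperZ 4 4 = 1 + cMatZ 5 3 * OmegaUpperZ 4 3 from rfl,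
    Matrix.mul_add, Matrix.mul_one, ← Matrix.mul_assoc, hR41,
    show OmegaUpperZ 4 3 = 1 + cMatZ 5 2 * OmegaUpperZ 4 2 from rfl,
    Matrix.mul_add, Matrix.mul_one, ← Matrix.mul_assoc, hR42,
    show OmegaUpperZ 4 2 = 1 + cMatZ 5 1 * OmegaUpperZ 4 1 from rfl,
    Matrix.mul_add, Matrix.mul_one, ← Matrix.mul_assoc, hR43,
    show OmegaUpperZ 4 1 = 1 + cMatZ 5 0 * OmegaUpperZ 4 0 from rfl,
    Matrix.mul_add, Matrix.mul_one, ← Matrix.mul_assoc, hR44,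
    show OmegaUpperZ 4 0 = 1 from rfl, Matrix.mul_one, hS4]
set_option maxHeartbeats 1000000 in
theorem hOm5 : OmegaZ 5 = 0 := by
  rw [show OmegaZ 5 = extMatZ 4 (OmegaZ 4) * OmegaUpperZ 4 4 from rfl, hOm4, hE4,
    Matrix.mul_assoc _ _ _, key4]
  decide
set_option maxHeartbeats 1000000 in
theorem hfac2 : LOm2 = AZ2 * BZ2 := by decide
set_option maxHeartbeats 1000000 in
theorem hfac3 : LOm3 = AZ3 * BZ3 := by decide
set_option maxHeartbeats 1000000 in
theorem hfac4 : LOm4 = AZ4 * BZ4 := by decide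
set_option maxHeartbeats 1000000 in
theorem hsub2 : PZ2 * (LOm2 * QZ2) = SZ2 := by decide
set_option maxHeartbeats 1000000 in
theorem hsub3 : PZ3 * (LOm3 * QZ3) = SZ3 := by decide
set_option maxHeartbeats 1000000 in
theorem hsub4 : PZ4 * (LOm4 * QZ4) = SZ4 := by decide
theorem hdet2 : SZ2.det = 2 := by
  rw [show SZ2 = !![1,1;-1,1] from rfl, Matrix.det_fin_two_of]; norm_num
theorem hdet3 : SZ3.det = 4 := by
  rw [show SZ3 = !![2,0;0,2] from rfl, Matrix.det_fin_two_of]; norm_num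
theorem hdet4 : SZ4.det = 2 := by
  rw [show SZ4 = !![2] from rfl, Matrix.det_fin_one]; norm_num
section KSide
variable {k : Type*} [Field k]

theorem hC (a b : Fin 2 × Fin 2) : diagC 2 (qA2 k) a b = ((CZ a b : ℤ) : k) := by
  obtain ⟨a1, a2⟩ := a
  unfold diagC CZ
  split_ifs with h
  · fin_cases a1 <;> fin_cases a2 <;> norm_num [qA2, qZ]
  · simp

theorem hcMat (n i : ℕ) :
    cMat 2 (diagC 2 (qA2 k)) n i = (cMatZ n i).map (Int.cast : ℤ → k) := by
  ext w' w
  simp only [cMat, cMatZ, Matrix.map_apply]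
  split_ifs with h1 h2
  · exact hC _ _
  · simp
  · simp

theorem hext (n : ℕ) (M : Matrix (Fin n → Fin 2) (Fin n → Fin 2) ℤ) :
    extMat 2 n (M.map (Int.cast : ℤ → k)) = (extMatZ n M).map (Int.cast : ℤ → k) := by
  ext w' w
  simp only [extMat, extMatZ, Matrix.map_apply, Int.cast_mul,
    apply_ite (Int.cast : ℤ → k), Int.cast_one, Int.cast_zero]

theorem hOU (n : ℕ) : ∀ m : ℕ,
    OmegaUpper 2 (diagC 2 (qA2 k)) n m = (OmegaUpperZ n m).map (Int.cast : ℤ → k)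
  | 0 => by
      rw [show (Int.cast : ℤ → k) = ⇑(Int.castRingHom k) from rfl]
      rw [show OmegaUpper 2 (diagC 2 (qA2 k)) n 0 = 1 from rfl,
        show OmegaUpperZ n 0 = 1 from rfl, Matrix.map_one _ (map_zero _) (map_one _)]
  | m + 1 => by
      rw [show (Int.cast : ℤ → k) = ⇑(Int.castRingHom k) from rfl] at *
      rw [show OmegaUpper 2 (diagC 2 (qA2 k)) n (m+1)
            = 1 + cMat 2 (diagC 2 (qA2 k)) (n+1) m * OmegaUpper 2 (diagC 2 (qA2 k)) n m
          from rfl,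
        show OmegaUpperZ n (m+1) = 1 + cMatZ (n+1) m * OmegaUpperZ n m from rfl,
        hOU n m, hcMat,
        Matrix.map_add _ (fun a b => map_add (Int.castRingHom k) a b),
        Matrix.map_one _ (map_zero _) (map_one _), Matrix.map_mul]
      rfl

theorem hOmega : ∀ n : ℕ,
    Omega 2 (diagC 2 (qA2 k)) n = (OmegaZ n).map (Int.cast : ℤ → k)
  | 0 => by
      rw [show (Int.cast : ℤ → k) = ⇑(Int.castRingHom k) from rfl]
      rw [show Omega 2 (diagC 2 (qA2 k)) 0 = 1 from rfl, show OmegaZ 0 = 1 from rfl,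
        Matrix.map_one _ (map_zero _) (map_one _)]
  | n + 1 => by
      rw [show Omega 2 (diagC 2 (qA2 k)) (n+1)
            = extMat 2 n (Omega 2 (diagC 2 (qA2 k)) n) * OmegaUpper 2 (diagC 2 (qA2 k)) n n
          from rfl,
        show OmegaZ (n+1) = extMatZ n (OmegaZ n) * OmegaUpperZ n n from rfl,
        hOmega n, hOU, hext,
        show (Int.cast : ℤ → k) = ⇑(Int.castRingHom k) from rfl, Matrix.map_mul]

theorem rank0 : (Omega 2 (diagC 2 (qA2 k)) 0).rank = 1 := by
  rw [show Omega 2 (diagC 2 (qA2 k)) 0 = 1 from rfl, Matrix.rank_one]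
  simp

theorem rank1 : (Omega 2 (diagC 2 (qA2 k)) 1).rank = 2 := by
  rw [hOmega, hOm1,
    show (Int.cast : ℤ → k) = ⇑(Int.castRingHom k) from rfl,
    Matrix.map_one _ (map_zero _) (map_one _), Matrix.rank_one]
  simp

theorem rank_eq_of_wit {ι : Type*} [Fintype ι] [DecidableEq ι] {r : ℕ}
    (MZ : Matrix ι ι ℤ) (A : Matrix ι (Fin r) ℤ) (B : Matrix (Fin r) ι ℤ)
    (P : Matrix (Fin r) ι ℤ) (Q : Matrix ι (Fin r) ℤ) (S : Matrix (Fin r) (Fin r) ℤ)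
    (dS : ℤ) (hfac : MZ = A * B) (hsub : P * (MZ * Q) = S) (hdet : S.det = dS)
    (hdS : dS ≠ 0) [CharZero k] {M : Matrix ι ι k}
    (hM : M = MZ.map (Int.cast : ℤ → k)) : M.rank = r := by
  have hcast : (Int.cast : ℤ → k) = ⇑(Int.castRingHom k) := rfl
  refine le_antisymm ?_ ?_
  · rw [hM, hfac, hcast, Matrix.map_mul]
    exact le_trans (Matrix.rank_mul_le_left _ _)
      (le_trans (Matrix.rank_le_card_width _) (le_of_eq (Fintype.card_fin r)))
  · have hSk : (S.map (Int.cast : ℤ → k)) =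
        (P.map (Int.cast : ℤ → k)) * (M * Q.map (Int.cast : ℤ → k)) := by
      rw [hM, hcast, ← Matrix.map_mul, ← Matrix.map_mul, hsub]
    have hdetS : (S.map (Int.cast : ℤ → k)).det ≠ 0 := by
      rw [hcast, ← RingHom.mapMatrix_apply, ← RingHom.map_det, hdet]
      simpa using (Int.cast_ne_zero (α := k)).2 hdS
    have hrS : (S.map (Int.cast : ℤ → k)).rank = r := by
      rw [Matrix.rank_of_isUnit _ ((Matrix.isUnit_iff_isUnit_det _).2
        (isUnit_iff_ne_zero.2 hdetS)), Fintype.card_fin]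
    calc (r : ℕ) = (S.map (Int.cast : ℤ → k)).rank := hrS.symm
      _ ≤ (M * Q.map (Int.cast : ℤ → k)).rank := by
          rw [hSk]; exact Matrix.rank_mul_le_right _ _
      _ ≤ M.rank := Matrix.rank_mul_le_left _ _

variable [CharZero k]

theorem rank2 : (Omega 2 (diagC 2 (qA2 k)) 2).rank = 2 :=
  rank_eq_of_wit LOm2 AZ2 BZ2 PZ2 QZ2 SZ2 2 hfac2 hsub2 hdet2 (by norm_num)
    (by rw [hOmega, hOm2])

theorem rank3 : (Omega 2 (diagC 2 (qA2 k)) 3).rank = 2 :=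
  rank_eq_of_wit LOm3 AZ3 BZ3 PZ3 QZ3 SZ3 4 hfac3 hsub3 hdet3 (by norm_num)
    (by rw [hOmega, hOm3])

theorem rank4 : (Omega 2 (diagC 2 (qA2 k)) 4).rank = 1 :=
  rank_eq_of_wit LOm4 AZ4 BZ4 PZ4 QZ4 SZ4 2 hfac4 hsub4 hdet4 (by norm_num)
    (by rw [hOmega, hOm4])

omit [CharZero k] in
theorem omega_high (n : ℕ) (h : 5 ≤ n) : Omega 2 (diagC 2 (qA2 k)) n = 0 := by
  induction n, h using Nat.le_induction with
  | base =>
      rw [hOmega, hOm5]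
      ext w' w
      simp
  | succ n hn ih =>
      rw [show Omega 2 (diagC 2 (qA2 k)) (n+1)
            = extMat 2 n (Omega 2 (diagC 2 (qA2 k)) n) * OmegaUpper 2 (diagC 2 (qA2 k)) n n
          from rfl, ih]
      have : extMat 2 n (0 : Matrix (Fin n → Fin 2) (Fin n → Fin 2) k) = 0 := by
        ext w' w
        simp [extMat]
      rw [this, zero_mul]

end KSide
end NicholsA2

/-- For the 2-dimensional diagonal braided vector space with braiding matrix
`q = [[-1,-1],[1,-1]]` one has `q₁₁ = q₂₂ = -1` and `q₁₂ q₂₁ = q₁₁⁻¹` (Cartan type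
`A₂`), and the associated Nichols algebra has dimension `8`. -/
theorem stmt19 {k : Type*} [Field k] [IsAlgClosed k] [CharZero k] :
    qA2 k 0 0 = -1 ∧ qA2 k 1 1 = -1 ∧ qA2 k 0 1 * qA2 k 1 0 = (qA2 k 0 0)⁻¹ ∧
    NicholsHasDim 2 (diagC 2 (qA2 k)) 8 := by
  refine ⟨by norm_num [qA2], by norm_num [qA2], by norm_num [qA2], 5, ?_, ?_⟩
  · intro n hn
    rw [NicholsA2.omega_high n hn, Matrix.rank_zero]
  · rw [Finset.sum_range_succ, Finset.sum_range_succ, Finset.sum_range_succ,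
      Finset.sum_range_succ, Finset.sum_range_one,
      NicholsA2.rank0, NicholsA2.rank1, NicholsA2.rank2, NicholsA2.rank3, NicholsA2.rank4]
end
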